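/- Let T be a tree rooted at r with heavy child u, and suppose there exist two distinct colours c_1, c_2 ∈ L(r) such that for each i ∈ {1,2}, T − T_u admits an L-colouring assigning c_i to r. Then T admits an L-colouring if and only if T_u admits an L-colouring. -/

import Mathlib

/-- Rooted trees with vertices labelled by elements of `V`; the children are
given as an ordered list. -/
inductive LTree (V : Type) : Type where
  | node : V → List (LTree V) → LTree V

/-- The root (label) of a labelled rooted tree. -/
def LTree.root {V : Type} : LTree V → V
  | .node v _ => v

mutual
  /-- `LTree.Colors L c t` : the assignment `c` is a proper `L`-colouring of the
  tree `t`, i.e. every vertex gets a colour from its list and adjacent vertices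
  (parent/child pairs) get distinct colours. -/
  def LTree.Colors {V : Type} (L : V → Finset ℕ) (c : V → ℕ) : LTree V → Prop
    | .node v cs => c v ∈ L v ∧ (∀ t ∈ cs, c t.root ≠ c v) ∧ LTree.ColorsList L c cs
  def LTree.ColorsList {V : Type} (L : V → Finset ℕ) (c : V → ℕ) : List (LTree V) → Prop
    | [] => True
    | t :: ts => LTree.Colors L c t ∧ LTree.ColorsList L c ts
end

mutual
  /-- The list of labels of the vertices of a labelled rooted tree. -/
  def LTree.labels {V : Type} : LTree V → List V
    | .node v cs => v :: LTree.labelsList cs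
  def LTree.labelsList {V : Type} : List (LTree V) → List V
    | [] => []
    | t :: ts => LTree.labels t ++ LTree.labelsList ts
end

mutual
  /-- Number of vertices of a labelled rooted tree. -/
  def LTree.size {V : Type} : LTree V → ℕ
    | .node _ cs => 1 + LTree.sizeList cs
  def LTree.sizeList {V : Type} : List (LTree V) → ℕ
    | [] => 0
    | t :: ts => LTree.size t + LTree.sizeList ts
end

/-- The `i`th child in the list `cs` of children subtrees is *heavy* if its
subtree is at least as large as every other child's subtree, with strict
inequality for children preceding it in the order. -/
def LHeavyIdx {V : Type} (cs : List (LTree V)) (i : Fin cs.length) : Prop :=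
  ∀ j : Fin cs.length,
    (cs.get j).size ≤ (cs.get i).size ∧ (j < i → (cs.get j).size < (cs.get i).size)


namespace LTree

variable {V : Type}

@[simp]
theorem labelsList_append (a b : List (LTree V)) :
    labelsList (a ++ b) = labelsList a ++ labelsList b := by
  induction a with
  | nil => simp [labelsList]
  | cons t ts ih => simp [labelsList, ih]

theorem mem_labelsList {cs : List (LTree V)} {w : V} :
    w ∈ labelsList cs ↔ ∃ t ∈ cs, w ∈ t.labels := by
  induction cs with
  | nil => simp [labelsList]
  | cons t ts ih => simp [labelsList, ih]

theorem root_mem_labels (t : LTree V) : t.root ∈ t.labels := by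
  cases t
  simp [root, labels]

theorem labels_node_insert_perm (r : V) (cs1 cs2 : List (LTree V)) (u : LTree V) :
    (node r (cs1 ++ u :: cs2)).labels.Perm (u.labels ++ (node r (cs1 ++ cs2)).labels) := by
  simp only [labels, labelsList_append, labelsList]
  exact ((List.perm_append_comm_assoc _ _ _).cons r).trans List.perm_middle.symm

theorem colorsList_iff (L : V → Finset ℕ) (c : V → ℕ) (cs : List (LTree V)) :
    ColorsList L c cs ↔ ∀ t ∈ cs, Colors L c t := by
  induction cs with
  | nil => simp [ColorsList]
  | cons t ts ih => simp [ColorsList, ih]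

theorem colors_node_iff (L : V → Finset ℕ) (c : V → ℕ) (v : V) (cs : List (LTree V)) :
    Colors L c (node v cs) ↔ c v ∈ L v ∧ ∀ t ∈ cs, c t.root ≠ c v ∧ Colors L c t := by
  simp only [Colors, colorsList_iff]
  grind

mutual
theorem colors_congr (L : V → Finset ℕ) {c c' : V → ℕ} :
    ∀ t : LTree V, (∀ v ∈ t.labels, c v = c' v) → Colors L c t → Colors L c' t
  | .node v cs, h, ⟨hv, hroots, hcs⟩ => by
    simp only [labels, List.mem_cons, forall_eq_or_imp] at h
    refine ⟨h.1 ▸ hv, fun t ht => ?_, colorsList_congr L cs h.2 hcs⟩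
    rw [← h.1, ← h.2 t.root (mem_labelsList.2 ⟨t, ht, root_mem_labels t⟩)]
    exact hroots t ht
theorem colorsList_congr (L : V → Finset ℕ) {c c' : V → ℕ} :
    ∀ cs : List (LTree V), (∀ v ∈ labelsList cs, c v = c' v) →
      ColorsList L c cs → ColorsList L c' cs
  | [], _, _ => trivial
  | t :: ts, h, ⟨ht, hts⟩ => by
    simp only [labelsList, List.mem_append, or_imp, forall_and] at h
    exact ⟨colors_congr L t h.1 ht, colorsList_congr L ts h.2 hts⟩
end

theorem colors_ite_of_subset (L : V → Finset ℕ) {c c' : V → ℕ} {s : List V} {t : LTree V}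
    [DecidablePred (· ∈ s)] (ht : Colors L c t) (hts : ∀ v ∈ t.labels, v ∈ s) :
    Colors L (fun v => if v ∈ s then c v else c' v) t :=
  colors_congr L t (fun v hv => by simp [hts v hv]) ht

theorem colors_ite_of_disjoint (L : V → Finset ℕ) {c c' : V → ℕ} {s : List V} {t : LTree V}
    [DecidablePred (· ∈ s)] (ht : Colors L c' t) (hts : ∀ v ∈ t.labels, v ∉ s) :
    Colors L (fun v => if v ∈ s then c v else c' v) t :=
  colors_congr L t (fun v hv => by simp [hts v hv]) ht

section Insert

variable {L : V → Finset ℕ} {r : V} {cs1 cs2 : List (LTree V)} {u : LTree V}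

theorem colors_of_colors_node_insert {c : V → ℕ}
    (hc : Colors L c (node r (cs1 ++ u :: cs2))) : Colors L c u :=
  ((colors_node_iff L c r _).1 hc).2 u (by simp) |>.2

theorem colors_node_insert {c : V → ℕ} (hc : Colors L c (node r (cs1 ++ cs2)))
    (hu : Colors L c u) (hroot : c u.root ≠ c r) : Colors L c (node r (cs1 ++ u :: cs2)) := by
  rw [colors_node_iff] at hc ⊢
  refine ⟨hc.1, fun t ht => ?_⟩
  rcases List.mem_append.1 ht with ht | ht
  · exact hc.2 t (List.mem_append_left _ ht)
  · rcases List.mem_cons.1 ht with rfl | ht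
    · exact ⟨hroot, hu⟩
    · exact hc.2 t (List.mem_append_right _ ht)

/-- By `hnodup` the vertex sets of `T − T_u` and `T_u` are disjoint, so the two colourings
can be combined piecewise. -/
theorem exists_colors_node_insert (hnodup : (node r (cs1 ++ u :: cs2)).labels.Nodup)
    {c cu : V → ℕ} (hc : Colors L c (node r (cs1 ++ cs2))) (hu : Colors L cu u)
    (hroot : cu u.root ≠ c r) : ∃ c, Colors L c (node r (cs1 ++ u :: cs2)) := by
  classical
  have hdisj : ∀ v ∈ (node r (cs1 ++ cs2)).labels, v ∉ u.labels := fun v hv hvu =>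
    List.disjoint_of_nodup_append ((labels_node_insert_perm r cs1 cs2 u).nodup_iff.1 hnodup)
      hvu hv
  refine ⟨fun v => if v ∈ u.labels then cu v else c v,
    colors_node_insert (colors_ite_of_disjoint L hc hdisj) (colors_ite_of_subset L hu fun _ => id) ?_⟩
  simpa [root_mem_labels, hdisj r (root_mem_labels _)] using hroot

end Insert

end LTree

/-- Let `T` be the tree rooted at `r` with children subtrees `cs1 ++ u :: cs2`,
where `u` is the heavy child, and suppose there are two distinct colours
`c₁, c₂ ∈ L r` each achievable as the colour of `r` in an `L`-colouring of
`T − T_u`.  Then `T` admits an `L`-colouring iff `T_u` does. -/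
theorem noncritical_reduction (V : Type) (r : V) (cs1 cs2 : List (LTree V))
    (u : LTree V) (L : V → Finset ℕ)
    (hnodup : (LTree.node r (cs1 ++ u :: cs2)).labels.Nodup)
    (hheavy : LHeavyIdx (cs1 ++ u :: cs2)
      ⟨cs1.length, by simp⟩)
    (c₁ c₂ : ℕ) (hne : c₁ ≠ c₂) (h₁ : c₁ ∈ L r) (h₂ : c₂ ∈ L r)
    (hach₁ : ∃ c, LTree.Colors L c (LTree.node r (cs1 ++ cs2)) ∧ c r = c₁)
    (hach₂ : ∃ c, LTree.Colors L c (LTree.node r (cs1 ++ cs2)) ∧ c r = c₂) :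
    (∃ c, LTree.Colors L c (LTree.node r (cs1 ++ u :: cs2))) ↔
      (∃ c, LTree.Colors L c u) := by
  refine ⟨fun ⟨c, hc⟩ => ⟨c, LTree.colors_of_colors_node_insert hc⟩, fun ⟨cu, hu⟩ => ?_⟩
  -- one of the two achievable colours at `r` avoids the colour of the root of `u`
  obtain ⟨c, hc, hroot⟩ :
      ∃ c, LTree.Colors L c (LTree.node r (cs1 ++ cs2)) ∧ cu u.root ≠ c r := by
    by_cases h : cu u.root = c₁
    · obtain ⟨c, hc, rfl⟩ := hach₂
      exact ⟨c, hc, h ▸ hne⟩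
    · obtain ⟨c, hc, rfl⟩ := hach₁
      exact ⟨c, hc, h⟩
  exact LTree.exists_colors_node_insert hnodup hc hu hroot
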